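/- Let z ~ N(0, σ²I_d) and define the privatised ATT estimate τ̂_{n,ATT}(z) = (1/n)Σ_{i=1}^n (t_i − (1−t_i)·exp(w·x_i)·exp(z·x_i))·y_i. Then E[τ̂_{n,ATT}(z)] = τ̂_ATT + (1/n)Σ_{i=1}^n α_{i,ATT}·(exp(σ²‖x_i‖²/2) − 1), where τ̂_ATT = (1/n)Σ_i (t_i − (1−t_i)exp(w·x_i))·y_i and α_{i,ATT} = −1_{t_i=0}·y_i·exp(w·x_i). -/

import Mathlib

/-!
The estimate is affine in the random factors `exp ⟪z, xᵢ⟫`, so its expectation is obtained by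
replacing each of them by its mean. Since the coordinates of `z` are independent centred
Gaussians, `E exp ⟪z, a⟫` factorises into one-dimensional moment generating functions and equals
`exp (σ² ‖a‖² / 2)`.
-/

open MeasureTheory ProbabilityTheory Real
open scoped NNReal

section PiGaussian

variable {ι : Type*} [Fintype ι] (m : ι → ℝ) (v : ι → ℝ≥0) (a : ι → ℝ)

lemma exp_sum_mul_eq_prod (z : ι → ℝ) : exp (∑ j, z j * a j) = ∏ j, exp (a j * z j) := by
  simp_rw [exp_sum, mul_comm]

lemma integrable_exp_sum_mul_pi_gaussianReal :
    Integrable (fun z ↦ exp (∑ j, z j * a j)) (Measure.pi fun j ↦ gaussianReal (m j) (v j)) := by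
  simp_rw [exp_sum_mul_eq_prod]
  exact Integrable.fintype_prod (f := fun j s ↦ exp (a j * s))
    fun j ↦ integrable_exp_mul_gaussianReal (a j)

lemma integral_exp_sum_mul_pi_gaussianReal :
    ∫ z, exp (∑ j, z j * a j) ∂(Measure.pi fun j ↦ gaussianReal (m j) (v j))
      = exp (∑ j, (m j * a j + v j * a j ^ 2 / 2)) := by
  simp_rw [exp_sum_mul_eq_prod, integral_fintype_prod_eq_prod (fun j s ↦ exp (a j * s)), exp_sum]
  exact Finset.prod_congr rfl fun j _ ↦ congrFun mgf_fun_id_gaussianReal (a j)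

end PiGaussian

lemma integral_const_sub_mul_mul_const {Ω : Type*} [MeasurableSpace Ω] {μ : Measure Ω}
    [IsProbabilityMeasure μ] {f : Ω → ℝ} (hf : Integrable f μ) (c b y : ℝ) :
    ∫ z, (c - b * f z) * y ∂μ = (c - b * ∫ z, f z ∂μ) * y := by
  rw [integral_mul_const, integral_sub (integrable_const c) (hf.const_mul b), integral_const,
    integral_const_mul, probReal_univ, one_smul]

theorem exp_privatised_att_general (d n : ℕ) (σ : ℝ)
    (x : Fin n → Fin d → ℝ) (t : Fin n → Bool) (y : Fin n → ℝ) (w : Fin d → ℝ) :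
    ∫ z : Fin d → ℝ,
        (1 / (n : ℝ)) * ∑ i,
          ((if t i then (1:ℝ) else 0)
            - (if t i then (0:ℝ) else 1) * Real.exp (∑ j, w j * x i j)
                * Real.exp (∑ j, z j * x i j)) * y i
        ∂(Measure.pi fun _ : Fin d => gaussianReal 0 ⟨σ ^ 2, sq_nonneg σ⟩)
      = (1 / (n : ℝ)) * ∑ i,
          ((if t i then (1:ℝ) else 0)
            - (if t i then (0:ℝ) else 1) * Real.exp (∑ j, w j * x i j)) * y i
        + (1 / (n : ℝ)) * ∑ i,
          (-(if t i then (0:ℝ) else 1) * y i * Real.exp (∑ j, w j * x i j))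
            * (Real.exp (σ ^ 2 * (∑ j, (x i j) ^ 2) / 2) - 1) := by
  -- `⟨σ ^ 2, _⟩` is elaborated at the subtype `{r // 0 ≤ r}`, not at `ℝ≥0`, which blocks
  -- instance search for the product measure; `set` restores the type `ℝ≥0`.
  set v : ℝ≥0 := ⟨σ ^ 2, sq_nonneg σ⟩
  have hv : (v : ℝ) = σ ^ 2 := rfl
  have hint (i : Fin n) := integrable_exp_sum_mul_pi_gaussianReal (fun _ ↦ 0) (fun _ ↦ v) (x i)
  rw [integral_const_mul, integral_finsetSum _ fun i _ ↦ ?integrable]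
  case integrable => exact ((integrable_const _).sub ((hint i).const_mul _)).mul_const _
  simp_rw [integral_const_sub_mul_mul_const (hint _), integral_exp_sum_mul_pi_gaussianReal]
  rw [← mul_add, ← Finset.sum_add_distrib]
  congr 1
  refine Finset.sum_congr rfl fun i _ ↦ ?_
  simp only [zero_mul, zero_add, hv, ← Finset.sum_div, ← Finset.mul_sum]
  ring

/-- ATT analogue of Lemma 1: expectation of the privatised ATT estimate under
`z ~ N(0, σ² I_d)`. -/
theorem exp_privatised_att (d n : ℕ) (hn : 0 < n) (σ : ℝ)
    (x : Fin n → Fin d → ℝ) (t : Fin n → Bool) (y : Fin n → ℝ) (w : Fin d → ℝ) :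
    ∫ z : Fin d → ℝ,
        (1 / (n : ℝ)) * ∑ i,
          ((if t i then (1:ℝ) else 0)
            - (if t i then (0:ℝ) else 1) * Real.exp (∑ j, w j * x i j)
                * Real.exp (∑ j, z j * x i j)) * y i
        ∂(Measure.pi fun _ : Fin d => gaussianReal 0 ⟨σ ^ 2, sq_nonneg σ⟩)
      = (1 / (n : ℝ)) * ∑ i,
          ((if t i then (1:ℝ) else 0)
            - (if t i then (0:ℝ) else 1) * Real.exp (∑ j, w j * x i j)) * y i
        + (1 / (n : ℝ)) * ∑ i,
          (-(if t i then (0:ℝ) else 1) * y i * Real.exp (∑ j, w j * x i j))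
            * (Real.exp (σ ^ 2 * (∑ j, (x i j) ^ 2) / 2) - 1) :=
  exp_privatised_att_general d n σ x t y w
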